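/- arXiv:1609.04780 — 2 statements merged into one kernel-verified Lean document; each statement's English description precedes it below -/
import Mathlib

section
/- For every integer n ≥ 2, the reduction of G_n modulo 2 equals the reduction of f_n² modulo 2; that is, the images of G_n and f_n² under the ring homomorphism ℤ[u] → (ℤ/2ℤ)[u] coincide. -/
open Polynomial

/-- `f 0 = 0`, `f 1 = 1`, `f (j+2) = X * f (j+1) - f j`. -/
noncomputable def f : ℕ → Polynomial ℤ
  | 0 => 0
  | 1 => 1
  | (j + 2) => X * f (j + 1) - f j

/-- `g j = f j - f (j-1)`. -/
noncomputable def g (j : ℕ) : Polynomial ℤ := f j - f (j - 1)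

/-- `G j = g_{j+1}' * g_j - g_{j+1} * g_j'`. -/
noncomputable def G (j : ℕ) : Polynomial ℤ :=
  derivative (g (j + 1)) * g j - g (j + 1) * derivative (g j)

lemma f_add_two (j : ℕ) : f (j + 2) = X * f (j + 1) - f j := rfl

lemma g_rec (j : ℕ) : g (j + 3) = X * g (j + 2) - g (j + 1) := by
  show f (j + 3) - f (j + 2) = X * (f (j + 2) - f (j + 1)) - (f (j + 1) - f j)
  rw [show j + 3 = (j + 1) + 2 from rfl, f_add_two, f_add_two]
  ring

lemma G_step (j : ℕ) : G (j + 2) = g (j + 2) ^ 2 + G (j + 1) := by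
  unfold G
  rw [show j + 2 + 1 = j + 3 from rfl, g_rec]
  simp only [derivative_sub, derivative_mul, derivative_X, one_mul]
  ring

lemma hf2 : f 2 = X := by
  rw [show (2 : ℕ) = 0 + 2 from rfl, f_add_two]; simp [f]

lemma hf3 : f 3 = X ^ 2 - 1 := by
  rw [show (3 : ℕ) = 1 + 2 from rfl, f_add_two, hf2]; simp [f]; ring

lemma hg2 : g 2 = X - 1 := by
  unfold g; rw [show (2:ℕ) - 1 = 1 from rfl, hf2, show f 1 = 1 from rfl]

lemma hg3 : g 3 = X ^ 2 - X - 1 := by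
  unfold g; rw [show (3:ℕ) - 1 = 2 from rfl, hf2, hf3]; ring

lemma hG2 : G 2 = X ^ 2 - 2 * X + 2 := by
  unfold G
  rw [show (2:ℕ) + 1 = 3 from rfl, hg2, hg3]
  simp only [derivative_sub, derivative_mul, derivative_X, derivative_one, derivative_X_pow]
  norm_num
  ring

theorem G_mod_two_eq_f_sq (n : ℕ) (hn : 2 ≤ n) :
    (G n).map (Int.castRingHom (ZMod 2)) = ((f n) ^ 2).map (Int.castRingHom (ZMod 2)) := by
  have h2 : (2 : Polynomial (ZMod 2)) = 0 := by
    have := CharP.cast_eq_zero (Polynomial (ZMod 2)) 2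
    exact_mod_cast this
  induction n, hn using Nat.le_induction with
  | base =>
    rw [hG2, hf2]
    simp only [Polynomial.map_add, Polynomial.map_sub, Polynomial.map_pow, Polynomial.map_mul,
      Polynomial.map_X, Polynomial.map_ofNat]
    linear_combination (1 - (X : Polynomial (ZMod 2))) * h2
  | succ n hn ih =>
    have key : G (n + 1) = g (n + 1) ^ 2 + G n := by
      obtain ⟨k, rfl⟩ := Nat.exists_eq_add_of_le hn
      rw [show 2 + k = k + 2 from by ring, show k + 2 + 1 = k + 1 + 2 from rfl, G_step]
    rw [key]
    have hg : g (n + 1) = f (n + 1) - f n := by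
      unfold g; norm_num
    rw [hg]
    simp only [Polynomial.map_add, Polynomial.map_sub, Polynomial.map_pow, ih]
    linear_combination ((f n).map (Int.castRingHom (ZMod 2)) *
      (((f n).map (Int.castRingHom (ZMod 2))) - (f (n + 1)).map (Int.castRingHom (ZMod 2)))) * h2
end

section
/- Let n ≥ 2 and let r₀ ∈ ℂ satisfy G_n(r₀) = 0. Then r₀ is an algebraic integer, f_n(r₀) ≠ 0, the number 1/f_n(r₀)² is not an algebraic integer, and the number 2 + r₀ − 1/f_n(r₀)² is not an algebraic integer. -/
open Polynomial

lemma f_rec (m : ℕ) : f (m + 2) = X * f (m + 1) - f m := rfl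

lemma f_one : f 1 = 1 := rfl
lemma f_zero : f 0 = 0 := rfl

lemma g_succ (m : ℕ) : g (m + 1) = f (m + 1) - f m := by simp [g]

/-- The standard invariant of the recurrence. -/
lemma fQ (m : ℕ) : f (m+1)^2 + f m ^2 - X * f (m+1) * f m = 1 := by
  induction m with
  | zero => rw [f_one, f_zero]; ring
  | succ k ih => rw [f_rec k]; linear_combination ih

/-- Wronskian recursion: `G (m+2) = g (m+2)^2 + G (m+1)`. -/
lemma GW (m : ℕ) : G (m+2) = g (m+2)^2 + G (m+1) := by
  unfold G
  rw [g_succ (m+2), g_succ (m+1), g_succ m, f_rec (m+1), f_rec m]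
  simp only [derivative_sub, derivative_mul, derivative_X, one_mul]
  ring

/-- The key identity `(X+2) * G n = 2n + X f n ^ 2 - 2 f n f (n-1)`. -/
lemma I1 (m : ℕ) : (X + 2) * G (m+2) =
    2 * (m : ℤ[X]) + 4 + X * f (m+2)^2 - 2 * (f (m+2) * f (m+1)) := by
  induction m with
  | zero =>
      unfold G
      rw [g_succ 2, g_succ 1, f_rec 1, f_rec 0, f_one, f_zero]
      simp only [derivative_sub, derivative_mul, derivative_X, derivative_one,
        derivative_zero, one_mul, Nat.cast_zero]
      ring
  | succ k ih =>
      rw [GW (k+1), g_succ (k+2)]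
      have hq := fQ (k+2)
      rw [f_rec (k+1)] at hq ⊢
      push_cast
      linear_combination ih + 2 * hq

lemma f_deg : ∀ m : ℕ, (f (m+1)).Monic ∧ (f (m+1)).degree = (m : ℕ) := by
  intro m
  induction m using Nat.strong_induction_on with
  | _ m ih =>
    match m with
    | 0 => exact ⟨by rw [f_one]; exact monic_one, by rw [f_one]; exact degree_one⟩
    | 1 =>
        have h : f 2 = X := by rw [f_rec 0, f_one, f_zero]; ring
        exact ⟨by rw [h]; exact monic_X, by rw [h]; exact degree_X⟩
    | (k+2) =>
        have h1 := ih (k+1) (by omega)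
        have h0 := ih k (by omega)
        have hm : (X * f (k+2)).Monic := monic_X.mul h1.1
        have hd : (X * f (k+2)).degree = ((k+2 : ℕ) : WithBot ℕ) := by
          rw [degree_mul, degree_X, h1.2]
          exact_mod_cast (by omega : 1 + (k+1) = k+2)
        have hlt : (-f (k+1)).degree < (X * f (k+2)).degree := by
          rw [hd, degree_neg, h0.2]
          exact_mod_cast by omega
        have he : f (k+3) = X * f (k+2) + -f (k+1) := by rw [f_rec (k+1)]; ring
        refine ⟨?_, ?_⟩
        · rw [he]; exact hm.add_of_left hlt
        · rw [he, degree_add_eq_left_of_degree_lt hlt, hd]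

/-- The monic integer polynomial `(X+2) * G (m+2)` written out. -/
noncomputable def P (m : ℕ) : ℤ[X] :=
  2 * (m : ℤ[X]) + 4 + X * f (m+2)^2 - 2 * (f (m+2) * f (m+1))

lemma P_monic (m : ℕ) : (P m).Monic := by
  have h1 := f_deg (m+1)
  have h0 := f_deg m
  have hm : (X * (f (m+2) * f (m+2))).Monic := monic_X.mul (h1.1.mul h1.1)
  have hd : (X * (f (m+2) * f (m+2))).degree = ((2*m+3 : ℕ) : WithBot ℕ) := by
    rw [degree_mul, degree_mul, degree_X, h1.2]
    exact_mod_cast (by omega : 1 + ((m+1) + (m+1)) = 2*m+3)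
  have hc : C ((2:ℤ)*m+4) = 2 * (m : ℤ[X]) + 4 := by
    simp only [map_add, map_mul, map_ofNat, C_eq_natCast]
  have hc2 : C (2:ℤ) = (2:ℤ[X]) := map_ofNat C 2
  have hmul : (C (2:ℤ) * (f (m+2) * f (m+1))).degree = ((2*m+1 : ℕ) : WithBot ℕ) := by
    rw [degree_mul, degree_mul, degree_C (by norm_num), h1.2, h0.2]
    exact_mod_cast (by omega : 0 + ((m+1) + m) = 2*m+1)
  have hrest : (2 * (m : ℤ[X]) + 4 - 2 * (f (m+2) * f (m+1))).degree
      < (X * (f (m+2) * f (m+2))).degree := by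
    rw [hd, ← hc, ← hc2]
    apply lt_of_le_of_lt (degree_sub_le _ _)
    apply max_lt
    · exact lt_of_le_of_lt degree_C_le (by exact_mod_cast (by omega : 0 < 2*m+3))
    · rw [hmul]; exact_mod_cast (by omega : 2*m+1 < 2*m+3)
  have he : P m = X * (f (m+2) * f (m+2)) +
      (2 * (m : ℤ[X]) + 4 - 2 * (f (m+2) * f (m+1))) := by unfold P; ring
  rw [he]
  exact hm.add_of_left hrest

/-- `G n ≡ f n ^ 2 (mod 2)`. -/
lemma G_sub_sq_even (m : ℕ) : ∃ h : ℤ[X], G (m+2) = f (m+2)^2 + 2 * h := by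
  have key : (X + 2) * (G (m+2) - f (m+2)^2) =
      2 * ((m : ℤ[X]) + 2 - f (m+2) * f (m+1) - f (m+2)^2) := by
    linear_combination I1 m
  set D := G (m+2) - f (m+2)^2 with hD
  have hmap : D.map (Int.castRingHom (ZMod 2)) = 0 := by
    have h2 := congrArg (Polynomial.map (Int.castRingHom (ZMod 2))) key
    simp only [Polynomial.map_mul, Polynomial.map_add, Polynomial.map_ofNat,
      map_X] at h2
    have h0 : ((2:(ZMod 2)[X])) = 0 := by
      rw [← map_ofNat (C : ZMod 2 →+* (ZMod 2)[X]) 2,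
        show ((2:ZMod 2)) = 0 from rfl, map_zero]
    rw [h0, add_zero, zero_mul] at h2
    rcases mul_eq_zero.mp h2 with h | h
    · exact absurd h X_ne_zero
    · exact h
  have hdvd : (C (2:ℤ)) ∣ D := by
    rw [C_dvd_iff_dvd_coeff]
    intro i
    have := congrArg (fun p => Polynomial.coeff p i) hmap
    simp only [coeff_map, coeff_zero] at this
    exact_mod_cast (ZMod.intCast_zmod_eq_zero_iff_dvd _ 2).mp this
  obtain ⟨h, hh⟩ := hdvd
  refine ⟨h, ?_⟩
  rw [map_ofNat C 2] at hh
  linear_combination hh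

lemma aeval_isIntegral {x : ℂ} (hx : IsIntegral ℤ x) (p : ℤ[X]) :
    IsIntegral ℤ (aeval x p) := by
  let y : integralClosure ℤ ℂ := ⟨x, hx⟩
  have hxy : x = algebraMap (integralClosure ℤ ℂ) ℂ y := rfl
  rw [hxy, Polynomial.aeval_algebraMap_apply]
  exact (aeval y p).2

lemma not_int_half : ¬ IsIntegral ℤ ((2:ℂ)⁻¹) := by
  intro h
  letI : IsIntegrallyClosed ℤ := GCDMonoid.toIsIntegrallyClosed
  rw [show ((2:ℂ)⁻¹) = algebraMap ℚ ℂ (2⁻¹) by norm_num] at h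
  rw [isIntegral_algebraMap_iff (algebraMap ℚ ℂ).injective] at h
  obtain ⟨y, hy⟩ := IsIntegrallyClosed.isIntegral_iff.mp h
  have h2 : ((2 * y : ℤ) : ℚ) = 1 := by
    push_cast
    rw [show ((y:ℚ)) = 2⁻¹ from hy]
    norm_num
  have : (2 * y : ℤ) = 1 := by exact_mod_cast h2
  omega

theorem root_of_G_non_integrality (n : ℕ) (hn : 2 ≤ n) (r₀ : ℂ)
    (hr : aeval r₀ (G n) = 0) :
    IsIntegral ℤ r₀ ∧ aeval r₀ (f n) ≠ 0 ∧
      ¬ IsIntegral ℤ (1 / (aeval r₀ (f n)) ^ 2) ∧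
      ¬ IsIntegral ℤ (2 + r₀ - 1 / (aeval r₀ (f n)) ^ 2) := by
  obtain ⟨m, rfl⟩ : ∃ m, n = m + 2 := ⟨n - 2, by omega⟩
  set a : ℂ := aeval r₀ (f (m+2)) with ha
  set b : ℂ := aeval r₀ (f (m+1)) with hb
  -- the key identity evaluated at r₀
  have key : (0:ℂ) = 2*(m:ℂ) + 4 + r₀ * a^2 - 2 * (a * b) := by
    have h := congrArg (aeval r₀) (I1 m)
    simp only [map_mul, map_add, map_sub, map_pow, map_ofNat, aeval_X,
      map_natCast] at h
    rw [hr, mul_zero] at h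
    exact h
  -- r₀ is an algebraic integer
  have hP : aeval r₀ (P m) = 0 := by
    unfold P
    rw [← I1 m, map_mul, hr, mul_zero]
  have hint : IsIntegral ℤ r₀ := ⟨P m, P_monic m, by rwa [aeval_def] at hP⟩
  -- f n (r₀) ≠ 0
  have ha0 : a ≠ 0 := by
    intro h
    rw [h] at key
    have hz : ((2*m+4 : ℕ) : ℂ) = 0 := by
      push_cast
      linear_combination (-1 : ℂ) * key
    exact absurd (Nat.cast_eq_zero.mp hz) (by omega)
  -- a^2 = -2u with u an algebraic integer
  obtain ⟨h2, hG2⟩ := G_sub_sq_even m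
  set u : ℂ := aeval r₀ h2 with hu'
  have hu : a^2 + 2 * u = 0 := by
    have h := congrArg (aeval r₀) hG2
    rw [hr] at h
    simp only [map_add, map_mul, map_pow, map_ofNat] at h
    linear_combination (-1 : ℂ) * h
  -- non-integrality of 1/a^2
  have cl3 : ¬ IsIntegral ℤ (1 / a ^ 2) := by
    intro hv
    have ha2 : a^2 ≠ 0 := pow_ne_zero _ ha0
    have e1 : (2:ℂ) * (-((1/a^2) * u)) = 1 := by
      field_simp
      linear_combination (-1 : ℂ) * hu
    have e2 : (2:ℂ)⁻¹ = -((1/a^2) * u) := inv_eq_of_mul_eq_one_right e1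
    apply not_int_half
    rw [e2]
    exact (hv.mul (aeval_isIntegral hint h2)).neg
  refine ⟨hint, ha0, cl3, ?_⟩
  intro hw
  apply cl3
  have h2int : IsIntegral ℤ (2:ℂ) := by
    simpa using isIntegral_algebraMap (R := ℤ) (A := ℂ) (x := (2:ℤ))
  have he : 1 / a ^ 2 = 2 + r₀ - (2 + r₀ - 1 / a ^ 2) := by ring
  rw [he]
  exact (h2int.add hint).sub hw
end
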